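/- Let N ≥ 2, let (τ_1,…,τ_N; ω_1,…,ω_N) be a Radau quadrature rule of order N, and let D‡ be the associated N×N matrix with entries D‡_{ij} = -(ω_j/ω_i) D_{ji}. Then D‡ is invertible. -/

import Mathlib

/-!
Removing the first column of `D` leaves the square matrix `D̂`, and `D‡ = -W⁻¹ D̂ᵀ W` with
`W = diag ω`, so it suffices that `D̂` is nonsingular. If `D̂ v = 0`, let `p` be the polynomial of
degree `≤ N` interpolating `0` at `τ_0 = -1` and `v_i` at `τ_i`. Then `D̂ v` lists the values of
`p'` at `τ_1, …, τ_N`, so `p'`, of degree `< N`, has `N` distinct roots and vanishes. Hence `p` is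
constant, equal to `p(τ_0) = 0`, and `v = 0`.
-/

open Polynomial Matrix

noncomputable section

/-- The differentiation matrix associated with nodes `σ 0, σ 1, …, σ N`
(`σ 0` being the non-collocated point):  `D i j = L̇_j(σ (i+1))`,
where `L_j` is the `j`-th Lagrange basis polynomial of the nodes. -/
def diffMat (N : ℕ) (σ : Fin (N + 1) → ℝ) : Matrix (Fin N) (Fin (N + 1)) ℝ :=
  fun i j => (derivative (Lagrange.basis Finset.univ σ j)).eval (σ i.succ)

/-- The matrix `D‡` with entries `D‡_{ij} = -(ω_j/ω_i) D_{ji}`, the indices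
`i, j` of `D` ranging over the collocation points `σ 1, …, σ N`. -/
def ddagMat (N : ℕ) (σ : Fin (N + 1) → ℝ) (ω : Fin N → ℝ) :
    Matrix (Fin N) (Fin N) ℝ :=
  fun i j => -(ω j / ω i) * diffMat N σ j i.succ

namespace Polynomial

theorem eq_C_of_derivative_eval_eq_zero {R ι : Type*} [CommRing R] [IsDomain R] [CharZero R]
    [Fintype ι] {p : R[X]} {f : ι → R} (hf : Function.Injective f)
    (hdeg : p.degree ≤ Fintype.card ι) (h : ∀ i, p.derivative.eval (f i) = 0) :
    p = C (p.coeff 0) := by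
  rcases eq_or_ne p.natDegree 0 with hp | hp
  · exact eq_C_of_natDegree_eq_zero hp
  · refine eq_C_of_derivative_eq_zero (eq_zero_of_natDegree_lt_card_of_eval_eq_zero _ hf h ?_)
    exact (natDegree_derivative_lt hp).trans_le (natDegree_le_iff_degree_le.2 hdeg)

end Polynomial

theorem Matrix.submatrix_succ_mulVec {m R : Type*} [Fintype m] [NonUnitalNonAssocSemiring R]
    {n : ℕ} (A : Matrix m (Fin (n + 1)) R) (v : Fin n → R) :
    A.submatrix id Fin.succ *ᵥ v = A *ᵥ Fin.cons 0 v := by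
  ext i
  simp [mulVec, dotProduct, Fin.sum_univ_succ]

theorem diffMat_mulVec (N : ℕ) (σ r : Fin (N + 1) → ℝ) :
    diffMat N σ *ᵥ r =
      fun i => (Lagrange.interpolate Finset.univ σ r).derivative.eval (σ i.succ) := by
  ext i
  simp [mulVec, dotProduct, diffMat, Lagrange.interpolate_apply, eval_finsetSum, mul_comm]

theorem det_diffMat_submatrix_succ_ne_zero {N : ℕ} {σ : Fin (N + 1) → ℝ}
    (hσ : Function.Injective σ) : ((diffMat N σ).submatrix id Fin.succ).det ≠ 0 := by
  rw [Ne, ← exists_mulVec_eq_zero_iff]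
  rintro ⟨v, hv, hMv⟩
  set r : Fin (N + 1) → ℝ := Fin.cons 0 v
  set p := Lagrange.interpolate Finset.univ σ r
  have hp_eval (k : Fin (N + 1)) : p.eval (σ k) = r k :=
    Lagrange.eval_interpolate_at_node r hσ.injOn (Finset.mem_univ k)
  have hp_const : p = C (p.coeff 0) := by
    refine eq_C_of_derivative_eval_eq_zero (hσ.comp (Fin.succ_injective N)) ?_ (congrFun ?_)
    · simpa only [Finset.card_univ, Fintype.card_fin, add_tsub_cancel_right] using
        Lagrange.degree_interpolate_le (s := Finset.univ) (r := r) hσ.injOn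
    · rwa [submatrix_succ_mulVec, diffMat_mulVec] at hMv
  refine hv (funext fun k => ?_)
  have hp_nodes : p.eval (σ k.succ) = p.eval (σ 0) := by rw [hp_const, eval_C, eval_C]
  simpa [hp_eval, r] using hp_nodes

theorem ddagMat_eq (N : ℕ) (σ : Fin (N + 1) → ℝ) (ω : Fin N → ℝ) :
    ddagMat N σ ω = diagonal ω⁻¹ * -((diffMat N σ).submatrix id Fin.succ)ᵀ * diagonal ω := by
  ext i j
  simp only [ddagMat, div_eq_inv_mul, neg_mul, mul_neg, mul_diagonal, diagonal_mul,
    Matrix.neg_apply, Pi.inv_apply, transpose_apply, submatrix_apply, id_eq]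
  ring

/-- For a Radau quadrature rule of order `N ≥ 2`, the matrix
`D‡` with entries `D‡_{ij} = -(ω_j/ω_i) D_{ji}` is invertible. -/
theorem ddag_invertible (N : ℕ) (hN : 2 ≤ N) (τ ω : Fin N → ℝ)
    (hmono : StrictMono τ)
    (hfirst : -1 < τ ⟨0, by omega⟩)
    (hω : ∀ i, 0 < ω i) :
    IsUnit (ddagMat N (Fin.cons (-1) τ) ω) := by
  have hτ (i : Fin N) : τ i ≠ -1 :=
    (hfirst.trans_le (hmono.monotone (Nat.zero_le i.val))).ne'
  have hσ : Function.Injective (Fin.cons (-1) τ : Fin (N + 1) → ℝ) :=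
    Fin.cons_injective_iff.2 ⟨fun ⟨i, hi⟩ => hτ i hi, hmono.injective⟩
  have hW : IsUnit ω := Pi.isUnit_iff.2 fun i => (hω i).ne'.isUnit
  rw [ddagMat_eq]
  refine ((isUnit_diagonal.2 hW.inv).mul (IsUnit.neg ?_)).mul (isUnit_diagonal.2 hW)
  rw [isUnit_iff_isUnit_det, det_transpose]
  exact (det_diffMat_submatrix_succ_ne_zero hσ).isUnit
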